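/- arXiv:math/0411113 — 2 statements merged into one kernel-verified Lean document; each statement's English description precedes it below -/
import Mathlib

section
/- Let q be the injective hull of a semisimple module b over an Artinian ring Λ, and let f : x → q be a monomorphism from a finite-length module x. If c is a complement of f(socle(x)) in the socle of q, then the map f ⊕ id : x ⊕ c → q is an injective hull of x ⊕ c. -/
/-- The socle of a module: the supremum of all its simple submodules. -/
def Module.socle (R : Type*) [Ring R] (M : Type*) [AddCommGroup M] [Module R M] :
    Submodule R M :=
  sSup {m : Submodule R M | IsSimpleModule R ↥m}

/-- The socle of any module is semisimple. -/
lemma socle_isSemisimple (R : Type*) [Ring R] (M : Type*) [AddCommGroup M] [Module R M] :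
    IsSemisimpleModule R (Module.socle R M) := by
  rw [Module.socle, sSup_eq_iSup]
  exact isSemisimpleModule_biSup_of_isSemisimpleModule_submodule
    (fun m hm => by have : IsSimpleModule R m := hm; infer_instance)

/-- A semisimple submodule contained in the range of an injective map `f`
is contained in the image of the socle. -/
lemma semisimple_le_range_le_map_socle
    (Λ : Type*) [Ring Λ] (q : Type*) [AddCommGroup q] [Module Λ q]
    (x : Type*) [AddCommGroup x] [Module Λ x]
    (f : x →ₗ[Λ] q) (hf : Function.Injective f)
    (D : Submodule Λ q) (hD : IsSemisimpleModule Λ D) (hDr : D ≤ LinearMap.range f) :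
    D ≤ (Module.socle Λ x).map f := by
  have htop : sSup { m : Submodule Λ D | IsSimpleModule Λ m } = ⊤ :=
    IsSemisimpleModule.sSup_simples_eq_top Λ D
  have : D = Submodule.map D.subtype (sSup { m : Submodule Λ D | IsSimpleModule Λ m }) := by
    rw [htop, Submodule.map_top, Submodule.range_subtype]
  rw [this, sSup_eq_iSup, Submodule.map_iSup]
  refine iSup_le fun T => ?_
  simp only [Submodule.map_iSup]
  refine iSup_le fun hT => ?_
  set T' : Submodule Λ q := Submodule.map D.subtype T with hT'
  have hT'simple : IsSimpleModule Λ T' :=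
    have : IsSimpleModule Λ T := hT
    IsSimpleModule.congr (Submodule.equivMapOfInjective D.subtype D.injective_subtype T).symm
  have hT'r : T' ≤ LinearMap.range f := le_trans (Submodule.map_subtype_le D T) hDr
  have hmc : Submodule.map f (Submodule.comap f T') = T' := Submodule.map_comap_eq_self hT'r
  have hsimple2 : IsSimpleModule Λ (Submodule.comap f T') := by
    have := hT'simple
    exact IsSimpleModule.congr
      ((Submodule.equivMapOfInjective f hf (Submodule.comap f T')).trans
        (LinearEquiv.ofEq _ _ hmc))
  calc T' = Submodule.map f (Submodule.comap f T') := hmc.symm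
    _ ≤ (Module.socle Λ x).map f := Submodule.map_mono (le_sSup hsimple2)

/-- Let `q` be the injective hull of its (semisimple) socle `b` over an Artinian ring `Λ`,
and let `f : x → q` be a monomorphism from a finite-length module `x`.  If `c` is a
complement of `f(socle x)` in `b = socle q`, then `f ⊕ id : x ⊕ c → q` is an injective
hull of `x ⊕ c`, i.e. it is injective and its image is an essential submodule of the
injective module `q`. -/
theorem injectiveHull_of_complement_in_socle
    (Λ : Type*) [Ring Λ] (hArt : IsArtinianRing Λ)
    (q : Type*) [AddCommGroup q] [Module Λ q] [Module.Injective Λ q]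
    -- `q` is an injective hull of its socle `b`: every nonzero submodule of `q` meets `b`
    (hess : ∀ N : Submodule Λ q, N ≠ ⊥ → N ⊓ Module.socle Λ q ≠ ⊥)
    (x : Type*) [AddCommGroup x] [Module Λ x] (hx : IsFiniteLength Λ x)
    (f : x →ₗ[Λ] q) (hf : Function.Injective f)
    (c : Submodule Λ q) (hc : c ≤ Module.socle Λ q)
    (hcompl : Disjoint ((Module.socle Λ x).map f) c)
    (hsum : ((Module.socle Λ x).map f) ⊔ c = Module.socle Λ q) :
    Function.Injective
        (f.comp (LinearMap.fst Λ x ↥c) + c.subtype.comp (LinearMap.snd Λ x ↥c)) ∧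
      ∀ N : Submodule Λ q, N ≠ ⊥ →
        N ⊓ LinearMap.range
            (f.comp (LinearMap.fst Λ x ↥c) + c.subtype.comp (LinearMap.snd Λ x ↥c)) ≠ ⊥ := by
  set g := f.comp (LinearMap.fst Λ x ↥c) + c.subtype.comp (LinearMap.snd Λ x ↥c) with hg
  -- the key fact: range f ⊓ c ≤ f(socle x)
  have hkey : LinearMap.range f ⊓ c ≤ (Module.socle Λ x).map f := by
    refine semisimple_le_range_le_map_socle Λ q x f hf _ ?_ inf_le_left
    -- range f ⊓ c is semisimple since it is (isomorphic to) a submodule of the socle of q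
    have hle : LinearMap.range f ⊓ c ≤ Module.socle Λ q := le_trans inf_le_right hc
    have := socle_isSemisimple Λ q
    have e := Submodule.comap_equiv_self_of_inj_of_le (Module.socle Λ q).injective_subtype
      (by simpa only [Submodule.range_subtype] using hle)
    exact IsSemisimpleModule.congr e.symm
  constructor
  · -- injectivity
    rw [← LinearMap.ker_eq_bot]
    rw [Submodule.eq_bot_iff]
    rintro ⟨a, s⟩ hker
    have h0 : f a + (s : q) = 0 := by
      simpa [g] using hker
    have hfa_c : f a ∈ c := by
      rw [show f a = -(s : q) from by rw [eq_neg_iff_add_eq_zero]; exact h0]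
      exact c.neg_mem s.2
    have hfa : f a ∈ (Module.socle Λ x).map f ⊓ c :=
      ⟨hkey ⟨⟨a, rfl⟩, hfa_c⟩, hfa_c⟩
    have hfa0 : f a = 0 := by
      rw [Disjoint.eq_bot hcompl] at hfa
      exact hfa
    have ha : a = 0 := hf (by rw [hfa0, map_zero])
    have hs : (s : q) = 0 := by
      have := h0; rw [hfa0, zero_add] at this; exact this
    exact Prod.ext ha (Subtype.ext hs)
  · -- essentiality
    intro N hN
    have hle : Module.socle Λ q ≤ LinearMap.range g := by
      rw [← hsum]
      refine sup_le ?_ ?_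
      · rintro v ⟨a, ha, rfl⟩
        exact ⟨(a, 0), by simp [g]⟩
      · intro v hv
        exact ⟨(0, ⟨v, hv⟩), by simp [g]⟩
    intro hbot
    exact hess N hN (le_bot_iff.mp (hbot ▸ inf_le_inf_left N hle))
end

section
/- Under the assumptions of the previous statement, for any nilpotent finite-dimensional submodule x ⊆ q_λ of dimension vector β = Σ b_i α_i one has φ_i(x) − ε_i(x) = (λ − β; α_i), where (·;·) is the symmetric bilinear form with (α_i;α_j) = a_{ij} and (λ;α_i) is the socle multiplicity of s_i in q_λ. (Proof: induction on the height of β using the one-step formula φ_i(y) − ε_i(y) = φ_i(x) − ε_i(x) − a_{ij} when y/x ≅ s_j, starting from the zero module where ε_i = 0 and φ_i = (λ;α_i).) -/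
/-- Post-composition with a `Λ`-linear equivalence gives a `k`-linear equivalence
of hom spaces. -/
def homCongrRight (k Λ P M N : Type) [Field k] [Ring Λ] [Algebra k Λ]
    [AddCommGroup P] [Module Λ P]
    [AddCommGroup M] [Module Λ M] [Module k M] [IsScalarTower k Λ M] [SMulCommClass Λ k M]
    [AddCommGroup N] [Module Λ N] [Module k N] [IsScalarTower k Λ N] [SMulCommClass Λ k N]
    (e : M ≃ₗ[Λ] N) : (P →ₗ[Λ] M) ≃ₗ[k] (P →ₗ[Λ] N) where
  toFun f := e.toLinearMap ∘ₗ f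
  invFun f := e.symm.toLinearMap ∘ₗ f
  map_add' f g := by ext p; simp
  map_smul' a f := by ext p; exact e.toLinearMap.map_smul_of_tower a (f p)
  left_inv f := by ext p; simp
  right_inv f := by ext p; simp

/-- For the preprojective algebra of a loop-free graph: if `x` is a nilpotent
finite-dimensional submodule of the injective module `q_λ` of dimension vector
`β = Σ b_i α_i` (exhibited by a composition chain `⊥ = c₀ ⊂ c₁ ⊂ ⋯ ⊂ c_n = x` with
`c_{k+1}/c_k ≅ s_{j_k}`), then `φ_i(x) − ε_i(x) = (λ − β; α_i)`, i.e.
`dim Hom(s_i, q_λ/x) − dim Hom(x, s_i) = dim Hom(s_i, q_λ) − Σ_k a_{i, j_k}`.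
The one-step recursion is taken as a hypothesis. -/
theorem phi_sub_epsilon_eq_pairing
    (k : Type) [Field k]
    (Λ : Type) [Ring Λ] [Algebra k Λ] [FiniteDimensional k Λ]
    (I : Type) (A : Matrix I I ℤ)
    (s : I → Type) [∀ i, AddCommGroup (s i)] [∀ i, Module Λ (s i)]
    [∀ i, Module k (s i)] [∀ i, IsScalarTower k Λ (s i)] [∀ i, SMulCommClass Λ k (s i)]
    [∀ i, FiniteDimensional k (s i)]
    (hsimple : ∀ i, IsSimpleModule Λ (s i))
    -- the injective module `q_λ`
    (q : Type) [AddCommGroup q] [Module Λ q] [Module.Injective Λ q]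
    [Module k q] [IsScalarTower k Λ q] [SMulCommClass Λ k q]
    -- the one-step recursion `φ_i(y) − ε_i(y) = φ_i(x) − ε_i(x) − a_{ij}`
    (hstep : ∀ (x y : Submodule Λ q), x ≤ y → ∀ j : I,
      Nonempty ((↥y ⧸ x.comap y.subtype) ≃ₗ[Λ] s j) → ∀ i : I,
      (Module.finrank k (s i →ₗ[Λ] (q ⧸ y)) : ℤ) - Module.finrank k (↥y →ₗ[Λ] s i) =
        (Module.finrank k (s i →ₗ[Λ] (q ⧸ x)) : ℤ) - Module.finrank k (↥x →ₗ[Λ] s i)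
          - A i j)
    -- a submodule `x` with a composition chain recording its dimension vector
    (x : Submodule Λ q) (n : ℕ) (c : Fin (n + 1) → Submodule Λ q) (js : Fin n → I)
    (hc0 : c 0 = ⊥) (hcn : c (Fin.last n) = x)
    (hle : ∀ m : Fin n, c m.castSucc ≤ c m.succ)
    (hquot : ∀ m : Fin n,
      Nonempty ((↥(c m.succ) ⧸ (c m.castSucc).comap (c m.succ).subtype) ≃ₗ[Λ] s (js m)))
    (i : I) :
    (Module.finrank k (s i →ₗ[Λ] (q ⧸ x)) : ℤ) - Module.finrank k (↥x →ₗ[Λ] s i) =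
      (Module.finrank k (s i →ₗ[Λ] q) : ℤ) - ∑ m : Fin n, A i (js m) := by
  -- the quantity `φ_i − ε_i` as a function of the submodule
  set F : Submodule Λ q → ℤ := fun p =>
    (Module.finrank k (s i →ₗ[Λ] (q ⧸ p)) : ℤ) - Module.finrank k (↥p →ₗ[Λ] s i) with hF
  -- value at the bottom submodule
  have hbot : F ⊥ = Module.finrank k (s i →ₗ[Λ] q) := by
    have e : (q ⧸ (⊥ : Submodule Λ q)) ≃ₗ[Λ] q := Submodule.quotEquivOfEqBot _ rfl
    have h1 : Module.finrank k (s i →ₗ[Λ] (q ⧸ (⊥ : Submodule Λ q)))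
        = Module.finrank k (s i →ₗ[Λ] q) :=
      (homCongrRight k Λ (s i) _ _ e).finrank_eq
    have h2 : Module.finrank k (↥(⊥ : Submodule Λ q) →ₗ[Λ] s i) = 0 :=
      Module.finrank_zero_of_subsingleton
    simp [hF, h1, h2]
  -- induction along the chain
  have key : ∀ m : ℕ, (hm : m ≤ n) →
      F (c ⟨m, Nat.lt_succ_of_le hm⟩) =
        F (c 0) - ∑ l : Fin n, if (l : ℕ) < m then A i (js l) else 0 := by
    intro m
    induction m with
    | zero =>
      intro _
      simp
    | succ m ih =>
      intro hm
      have hm' : m ≤ n := Nat.le_of_succ_le hm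
      have hmn : m < n := hm
      have hstep' := hstep (c (Fin.castSucc ⟨m, hmn⟩)) (c (Fin.succ ⟨m, hmn⟩))
        (hle ⟨m, hmn⟩) (js ⟨m, hmn⟩) (hquot ⟨m, hmn⟩) i
      have hcast : Fin.castSucc (⟨m, hmn⟩ : Fin n) = ⟨m, Nat.lt_succ_of_le hm'⟩ := rfl
      have hsucc : Fin.succ (⟨m, hmn⟩ : Fin n) = ⟨m + 1, Nat.lt_succ_of_le hm⟩ := rfl
      rw [hcast, hsucc] at hstep'
      have : F (c ⟨m + 1, Nat.lt_succ_of_le hm⟩)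
          = F (c ⟨m, Nat.lt_succ_of_le hm'⟩) - A i (js ⟨m, hmn⟩) := hstep'
      rw [this, ih hm']
      have hsum : ∑ l : Fin n, (if (l : ℕ) < m + 1 then A i (js l) else 0)
          = (∑ l : Fin n, if (l : ℕ) < m then A i (js l) else 0) + A i (js ⟨m, hmn⟩) := by
        have : ∀ l : Fin n, (if (l : ℕ) < m + 1 then A i (js l) else 0)
            = (if (l : ℕ) < m then A i (js l) else 0)
              + (if l = ⟨m, hmn⟩ then A i (js l) else 0) := by
          intro l
          rcases lt_trichotomy (l : ℕ) m with h | h | h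
          · have hne : l ≠ ⟨m, hmn⟩ := by
              intro hl; rw [hl] at h; exact absurd h (lt_irrefl m)
            simp [h, Nat.lt_succ_of_lt h, hne]
          · have heq : l = ⟨m, hmn⟩ := Fin.ext h
            simp [heq, Nat.lt_irrefl]
          · have h1 : ¬ (l : ℕ) < m + 1 := by omega
            have h2 : ¬ (l : ℕ) < m := by omega
            have hne : l ≠ ⟨m, hmn⟩ := by
              intro hl; rw [hl] at h; exact absurd h (lt_irrefl m)
            simp [h1, h2, hne]
        rw [Finset.sum_congr rfl (fun l _ => this l), Finset.sum_add_distrib,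
          Finset.sum_ite_eq' Finset.univ (⟨m, hmn⟩ : Fin n) (fun l => A i (js l))]
        simp
      rw [hsum]
      ring
  have hlast := key n le_rfl
  have hlast' : (⟨n, Nat.lt_succ_of_le le_rfl⟩ : Fin (n + 1)) = Fin.last n := rfl
  rw [hlast'] at hlast
  have hfull : ∑ l : Fin n, (if (l : ℕ) < n then A i (js l) else 0)
      = ∑ l : Fin n, A i (js l) :=
    Finset.sum_congr rfl (fun l _ => by simp [l.isLt])
  rw [hcn, hc0, hbot] at hlast
  rw [hfull] at hlast
  exact hlast
end
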